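/- arXiv:1806.03269 — 3 statements merged into one kernel-verified Lean document; each statement's English description precedes it below -/
import Mathlib

section
/- Let 0 < α < 1 and B ∈ ℝ, and let y(t) = E_α(−B t^α) = ∑_{n=0}^∞ (−B t^α)^n / Γ(αn + 1). Then for every t > 0 the Caputo derivative of y of order α exists and satisfies D^α y(t) = −B E_α(−B t^α); in particular y(0) = 1, so y solves the two-term fractional relaxation equation y^{(α)}(t) + B y(t) = 0 with y(0) = 1. -/
/-- The one-parameter Mittag-Leffler function `E_α(x) = ∑_{n=0}^∞ xⁿ/Γ(αn+1)`. -/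
noncomputable def mittagLeffler (α x : ℝ) : ℝ :=
  ∑' n : ℕ, x ^ n / Real.Gamma (α * n + 1)

/-- The Caputo fractional derivative of order `α` (for `0 < α < 1`) with base point `0`:
`D^α y(t) = (1/Γ(1−α)) ∫₀ᵗ (t−ξ)^{−α} y'(ξ) dξ`. -/
noncomputable def caputoDeriv (α : ℝ) (y : ℝ → ℝ) : ℝ → ℝ :=
  fun t => (1 / Real.Gamma (1 - α)) * ∫ ξ in (0 : ℝ)..t, (t - ξ) ^ (-α) * deriv y ξ

/-!
Differentiating term by term, `y'(ξ) = -B ξ^(α-1) E_{α,α}(-B ξ^α)`, where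
`E_{α,β}(x) = ∑ xⁿ/Γ(αn+β)` is the two-parameter Mittag-Leffler function. Each term of the
Caputo integral is then a Beta integral,
`∫₀ᵗ (t-ξ)^(-α) ξ^(αn+α-1) dξ = Γ(1-α) Γ(αn+α) / Γ(αn+1) · t^(αn)`,
which trades `Γ(αn+α)` back for `Γ(αn+1)`, so the integral sums to `-B Γ(1-α) E_α(-B t^α)`.
All series involved converge absolutely by the ratio test, because log-convexity of `Γ` gives
`Γ(s)/Γ(s+α) ≤ (s+α)^(1-α)/s → 0`; this justifies exchanging the sums with the derivative and
the integral.
-/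

open Real MeasureTheory Filter Topology Set

theorem Real.Gamma_add_one_le_Gamma_add_mul_rpow {s a : ℝ} (hs : 0 < s) (ha0 : 0 < a)
    (ha1 : a < 1) : Gamma (s + 1) ≤ Gamma (s + a) * (s + a) ^ (1 - a) := by
  have hsa : 0 < s + a := by positivity
  have hconv := Gamma_mul_add_mul_le_rpow_Gamma_mul_rpow_Gamma hsa (by positivity : 0 < s + a + 1)
    ha0 (by linarith : 0 < 1 - a) (by ring)
  rw [show a * (s + a) + (1 - a) * (s + a + 1) = s + 1 by ring, Gamma_add_one hsa.ne',
    mul_rpow hsa.le (Gamma_pos_of_pos hsa).le] at hconv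
  calc Gamma (s + 1) ≤ _ := hconv
    _ = Gamma (s + a) ^ (a + (1 - a)) * (s + a) ^ (1 - a) := by
      rw [rpow_add (Gamma_pos_of_pos hsa)]; ring
    _ = _ := by rw [add_sub_cancel, rpow_one]

theorem Real.tendsto_Gamma_div_Gamma_add {a : ℝ} (ha0 : 0 < a) (ha1 : a < 1) :
    Tendsto (fun s => Gamma s / Gamma (s + a)) atTop (𝓝 0) := by
  have hlim : Tendsto (fun s : ℝ => 2 ^ (1 - a) * s ^ (-a)) atTop (𝓝 0) := by
    simpa using (tendsto_rpow_neg_atTop ha0).const_mul (2 ^ (1 - a))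
  refine squeeze_zero' ?_ ?_ hlim
  · filter_upwards [eventually_gt_atTop 0] with s hs
    exact div_nonneg (Gamma_pos_of_pos hs).le (Gamma_pos_of_pos (by positivity)).le
  filter_upwards [eventually_ge_atTop 1] with s hs
  have hs0 : 0 < s := by linarith
  have hΓ : 0 < Gamma (s + a) := Gamma_pos_of_pos (by positivity)
  calc Gamma s / Gamma (s + a) = Gamma (s + 1) / (s * Gamma (s + a)) := by
        rw [Gamma_add_one hs0.ne']; field_simp
    _ ≤ (s + a) ^ (1 - a) / s := by
        rw [div_le_div_iff₀ (by positivity) hs0]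
        nlinarith [Gamma_add_one_le_Gamma_add_mul_rpow hs0 ha0 ha1]
    _ ≤ (2 * s) ^ (1 - a) / s := by
        gcongr; linarith
    _ = 2 ^ (1 - a) * s ^ (-a) := by
        rw [mul_rpow (by norm_num) hs0.le, rpow_sub hs0, rpow_one, rpow_neg hs0.le]
        field_simp

theorem summable_pow_div_Gamma {α : ℝ} (hα0 : 0 < α) (hα1 : α < 1) (β x : ℝ) :
    Summable fun n : ℕ => x ^ n / Gamma (α * n + β) := by
  rcases eq_or_ne x 0 with rfl | hx
  · exact (summable_nat_add_iff 1).mp (by simp)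
  have harg : Tendsto (fun n : ℕ => α * n + β) atTop atTop :=
    tendsto_atTop_add_const_right _ β (tendsto_natCast_atTop_atTop.const_mul_atTop hα0)
  have hpos : ∀ᶠ n : ℕ in atTop, 0 < Gamma (α * n + β) :=
    (harg.eventually_gt_atTop 0).mono fun n hn => Gamma_pos_of_pos hn
  refine summable_of_ratio_test_tendsto_lt_one zero_lt_one
    (hpos.mono fun n hn => div_ne_zero (pow_ne_zero n hx) hn.ne') ?_
  have hratio := ((tendsto_Gamma_div_Gamma_add hα0 hα1).comp harg).const_mul ‖x‖
  rw [mul_zero] at hratio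
  refine hratio.congr' ?_
  filter_upwards [hpos, (tendsto_add_atTop_nat 1).eventually hpos] with n hn hn1
  rw [show α * ((n + 1 : ℕ) : ℝ) + β = α * n + β + α by push_cast; ring] at hn1 ⊢
  simp only [Function.comp_apply, norm_div, norm_mul, norm_pow, pow_succ, Real.norm_of_nonneg hn.le,
    Real.norm_of_nonneg hn1.le]
  field_simp

noncomputable def mittagLeffler₂ (α β x : ℝ) : ℝ :=
  ∑' n : ℕ, x ^ n / Gamma (α * n + β)

theorem mittagLeffler₂_one (α x : ℝ) : mittagLeffler₂ α 1 x = mittagLeffler α x := rfl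

theorem mittagLeffler_zero (α : ℝ) : mittagLeffler α 0 = 1 := by
  rw [mittagLeffler, tsum_eq_single 0 fun n hn => by simp [zero_pow hn]]
  simp

theorem abs_mittagLeffler₂_le {α β x R : ℝ} (hα0 : 0 < α) (hα1 : α < 1) (hβ : 0 ≤ β)
    (hx : |x| ≤ R) : |mittagLeffler₂ α β x| ≤ mittagLeffler₂ α β R := by
  have hΓ (n : ℕ) : 0 ≤ Gamma (α * n + β) := Gamma_nonneg_of_nonneg (by positivity)
  have habs (n : ℕ) : |x ^ n / Gamma (α * n + β)| = |x| ^ n / Gamma (α * n + β) := by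
    rw [abs_div, abs_pow, abs_of_nonneg (hΓ n)]
  calc |mittagLeffler₂ α β x| ≤ ∑' n : ℕ, |x ^ n / Gamma (α * n + β)| := by
        refine norm_tsum_le_tsum_norm (f := fun n : ℕ => x ^ n / Gamma (α * n + β)) ?_
        simpa only [Real.norm_eq_abs, habs] using summable_pow_div_Gamma hα0 hα1 β |x|
    _ ≤ mittagLeffler₂ α β R := by
        refine Summable.tsum_le_tsum (fun n => ?_) ?_ (summable_pow_div_Gamma hα0 hα1 β R)
        · rw [habs]
          gcongr
        · simpa only [habs] using summable_pow_div_Gamma hα0 hα1 β |x|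

theorem hasDerivAt_tsum_mul_pow {c : ℕ → ℝ}
    (hc : ∀ r : ℝ, Summable fun n : ℕ => (n + 1) * c (n + 1) * r ^ n) (x : ℝ) :
    HasDerivAt (fun z => ∑' n : ℕ, c n * z ^ n) (∑' n : ℕ, (n + 1) * c (n + 1) * x ^ n) x := by
  set R := |x| + 1
  have hx : x ∈ Metric.ball (0 : ℝ) R := by simp [R]
  have hderiv (n : ℕ) (z : ℝ) : HasDerivAt (fun z => c n * z ^ n) (n * c n * z ^ (n - 1)) z := by
    simpa [mul_comm, mul_left_comm, mul_assoc] using (hasDerivAt_pow n z).const_mul (c n)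
  have hbound (n : ℕ) (z : ℝ) (hz : z ∈ Metric.ball (0 : ℝ) R) :
      ‖n * c n * z ^ (n - 1)‖ ≤ |n * c n| * R ^ (n - 1) := by
    rw [norm_mul, norm_pow, Real.norm_eq_abs, Real.norm_eq_abs]
    gcongr
    simpa using (mem_ball_zero_iff.mp hz).le
  have hu : Summable fun n : ℕ => |n * c n| * R ^ (n - 1) := by
    refine (summable_nat_add_iff 1).mp ?_
    refine ((hc R).abs).congr fun n => ?_
    rw [abs_mul, abs_of_pos (pow_pos (by positivity : (0 : ℝ) < R) n)]
    push_cast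
    simp
  have hzero : Summable fun n : ℕ => c n * (0 : ℝ) ^ n :=
    (summable_nat_add_iff 1).mp (by simp)
  have hsum := hasDerivAt_tsum_of_isPreconnected hu Metric.isOpen_ball
    (convex_ball 0 R).isPreconnected (fun n z _ => hderiv n z) hbound
    (Metric.mem_ball_self (x := (0 : ℝ)) (by positivity)) hzero hx
  rw [(Summable.of_norm_bounded hu fun n => hbound n x hx).tsum_eq_zero_add] at hsum
  simpa using hsum

theorem hasDerivAt_mittagLeffler {α : ℝ} (hα0 : 0 < α) (hα1 : α < 1) (x : ℝ) :
    HasDerivAt (mittagLeffler α) (mittagLeffler₂ α α x / α) x := by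
  have hcoeff (r : ℝ) (n : ℕ) : (n + 1) * (Gamma (α * (n + 1 : ℕ) + 1))⁻¹ * r ^ n
      = α⁻¹ * (r ^ n / Gamma (α * n + α)) := by
    have hpos : 0 < α * n + α := by positivity
    rw [show α * ((n + 1 : ℕ) : ℝ) + 1 = α * n + α + 1 by push_cast; ring,
      Gamma_add_one hpos.ne']
    field_simp
  have hseries := hasDerivAt_tsum_mul_pow (c := fun n => (Gamma (α * n + 1))⁻¹)
    (fun r => by simpa only [hcoeff] using (summable_pow_div_Gamma hα0 hα1 α r).mul_left α⁻¹) x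
  rw [tsum_congr (hcoeff x), tsum_mul_left, ← div_eq_inv_mul] at hseries
  have hfun : mittagLeffler α = fun z => ∑' n : ℕ, (Gamma (α * n + 1))⁻¹ * z ^ n :=
    funext fun z => tsum_congr fun n => div_eq_inv_mul _ _
  rw [hfun]
  exact hseries

theorem hasDerivAt_mittagLeffler_mul_rpow {α : ℝ} (hα0 : 0 < α) (hα1 : α < 1) (c : ℝ) {t : ℝ}
    (ht : 0 < t) :
    HasDerivAt (fun s => mittagLeffler α (c * s ^ α))
      (c * (t ^ (α - 1) * mittagLeffler₂ α α (c * t ^ α))) t := by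
  have hinner := (hasDerivAt_rpow_const (p := α) (Or.inl ht.ne')).const_mul c
  refine ((hasDerivAt_mittagLeffler hα0 hα1 _).comp t hinner).congr_deriv ?_
  field_simp

theorem integral_sub_rpow_mul_rpow {t μ ν : ℝ} (ht : 0 < t) (hμ : 0 < μ) (hν : 0 < ν) :
    ∫ ξ in 0..t, (t - ξ) ^ (μ - 1) * ξ ^ (ν - 1)
      = Gamma μ * Gamma ν / Gamma (μ + ν) * t ^ (μ + ν - 1) := by
  have hbeta := Complex.betaIntegral_scaled ν μ ht
  rw [Complex.betaIntegral_eq_Gamma_mul_div _ _ (by simpa) (by simpa)] at hbeta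
  apply Complex.ofReal_injective
  rw [← intervalIntegral.integral_ofReal]
  have hcongr : EqOn (fun ξ : ℝ => (((t - ξ) ^ (μ - 1) * ξ ^ (ν - 1) : ℝ) : ℂ))
      (fun ξ : ℝ => (ξ : ℂ) ^ ((ν : ℂ) - 1) * ((t : ℂ) - ξ) ^ ((μ : ℂ) - 1)) (uIcc 0 t) := by
    intro ξ hξ
    rw [uIcc_of_le ht.le] at hξ
    push_cast
    rw [Complex.ofReal_cpow (sub_nonneg.mpr hξ.2), Complex.ofReal_cpow hξ.1, mul_comm]
    push_cast
    ring_nf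
  rw [intervalIntegral.integral_congr hcongr, hbeta, ← Complex.ofReal_add,
    ← Complex.ofReal_one, ← Complex.ofReal_sub, ← Complex.ofReal_cpow ht.le,
    Complex.Gamma_ofReal, Complex.Gamma_ofReal, Complex.Gamma_ofReal, add_comm ν μ]
  push_cast
  ring

theorem intervalIntegrable_sub_rpow_mul_rpow {t μ ν : ℝ} (ht : 0 < t) (hμ : 0 < μ) (hν : 0 < ν) :
    IntervalIntegrable (fun ξ => (t - ξ) ^ (μ - 1) * ξ ^ (ν - 1)) volume 0 t := by
  refine intervalIntegral.intervalIntegrable_of_integral_ne_zero ?_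
  rw [integral_sub_rpow_mul_rpow ht hμ hν]
  have := Gamma_pos_of_pos hμ
  have := Gamma_pos_of_pos hν
  have := Gamma_pos_of_pos (add_pos hμ hν)
  positivity

theorem Real.rpow_mul_rpow_pow {ξ : ℝ} (hξ : 0 < ξ) (a b : ℝ) (n : ℕ) :
    ξ ^ a * (ξ ^ b) ^ n = ξ ^ (a + b * n) := by
  rw [← rpow_natCast, ← rpow_mul hξ.le, ← rpow_add hξ]

theorem intervalIntegrable_sub_rpow_mul_of_abs_le {f : ℝ → ℝ} {t μ ν C : ℝ} (ht : 0 < t)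
    (hμ : 0 < μ) (hν : 0 < ν) (hf : AEStronglyMeasurable f (volume.restrict (Ioc 0 t)))
    (hbound : ∀ ξ ∈ Ioc 0 t, |f ξ| ≤ C * ξ ^ (ν - 1)) :
    IntervalIntegrable (fun ξ => (t - ξ) ^ (μ - 1) * f ξ) volume 0 t := by
  rw [intervalIntegrable_iff_integrableOn_Ioc_of_le ht.le]
  refine Integrable.mono' (g := fun ξ => C * ((t - ξ) ^ (μ - 1) * ξ ^ (ν - 1)))
    (((intervalIntegrable_iff_integrableOn_Ioc_of_le ht.le).mp
      (intervalIntegrable_sub_rpow_mul_rpow ht hμ hν)).const_mul C)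
    (((measurable_const.sub measurable_id).pow_const _).aestronglyMeasurable.mul hf)
    (ae_restrict_of_forall_mem measurableSet_Ioc fun ξ hξ => ?_)
  have hkernel : 0 ≤ (t - ξ) ^ (μ - 1) := rpow_nonneg (sub_nonneg.mpr hξ.2) _
  rw [norm_mul, Real.norm_of_nonneg hkernel, Real.norm_eq_abs]
  calc (t - ξ) ^ (μ - 1) * |f ξ| ≤ (t - ξ) ^ (μ - 1) * (C * ξ ^ (ν - 1)) := by
        gcongr; exact hbound ξ hξ
    _ = C * ((t - ξ) ^ (μ - 1) * ξ ^ (ν - 1)) := by ring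

theorem integral_sub_rpow_mul_rpow_mul_mittagLeffler₂ {α β μ t : ℝ} (hα0 : 0 < α) (hα1 : α < 1)
    (hβ : 0 < β) (hμ : 0 < μ) (ht : 0 < t) (x : ℝ) :
    ∫ ξ in 0..t, (t - ξ) ^ (μ - 1) * (ξ ^ (β - 1) * mittagLeffler₂ α β (x * ξ ^ α))
      = Gamma μ * t ^ (μ + β - 1) * mittagLeffler₂ α (μ + β) (x * t ^ α) := by
  have hν (n : ℕ) : 0 < α * n + β := by positivity
  set F : ℝ → ℕ → ℝ → ℝ := fun x n ξ =>
    x ^ n / Gamma (α * n + β) * ((t - ξ) ^ (μ - 1) * ξ ^ (α * n + β - 1))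
  have hseries : ∀ ξ ∈ Ioc 0 t,
      (t - ξ) ^ (μ - 1) * (ξ ^ (β - 1) * mittagLeffler₂ α β (x * ξ ^ α)) = ∑' n, F x n ξ := by
    intro ξ hξ
    rw [mittagLeffler₂, ← tsum_mul_left, ← tsum_mul_left]
    refine tsum_congr fun n => ?_
    simp only [F]
    rw [show α * n + β - 1 = β - 1 + α * n by ring, ← rpow_mul_rpow_pow hξ.1, mul_pow]
    ring
  have hintegral (x : ℝ) (n : ℕ) : ∫ ξ in 0..t, F x n ξ
      = Gamma μ * t ^ (μ + β - 1) * ((x * t ^ α) ^ n / Gamma (α * n + (μ + β))) := by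
    have hΓ := (Gamma_pos_of_pos (hν n)).ne'
    rw [intervalIntegral.integral_const_mul, integral_sub_rpow_mul_rpow ht hμ (hν n), mul_pow,
      show μ + (α * n + β) - 1 = μ + β - 1 + α * n by ring, ← rpow_mul_rpow_pow ht,
      show μ + (α * n + β) = α * n + (μ + β) by ring]
    field_simp
  have hF_int (n : ℕ) : Integrable (F x n) (volume.restrict (Ioc 0 t)) :=
    (intervalIntegrable_iff_integrableOn_Ioc_of_le ht.le).mp
      ((intervalIntegrable_sub_rpow_mul_rpow ht hμ (hν n)).const_mul _)
  have hF_norm (n : ℕ) : ∫ ξ in Ioc 0 t, ‖F x n ξ‖ = ∫ ξ in 0..t, F |x| n ξ := by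
    rw [intervalIntegral.integral_of_le ht.le]
    refine setIntegral_congr_fun measurableSet_Ioc fun ξ hξ => ?_
    simp only [F, norm_mul, norm_div, norm_pow, Real.norm_eq_abs,
      abs_of_nonneg (rpow_nonneg (sub_nonneg.mpr hξ.2) _), abs_of_nonneg (rpow_nonneg hξ.1.le _),
      abs_of_pos (Gamma_pos_of_pos (hν n))]
  have hF_sum : Summable fun n => ∫ ξ in Ioc 0 t, ‖F x n ξ‖ := by
    simp_rw [hF_norm, hintegral]
    exact (summable_pow_div_Gamma hα0 hα1 _ _).mul_left _
  rw [intervalIntegral.integral_of_le ht.le, setIntegral_congr_fun measurableSet_Ioc hseries,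
    ← integral_tsum_of_summable_integral_norm hF_int hF_sum]
  simp_rw [← intervalIntegral.integral_of_le ht.le, hintegral]
  rw [tsum_mul_left, mittagLeffler₂]

theorem intervalIntegrable_sub_rpow_mul_deriv_mittagLeffler_mul_rpow {α : ℝ} (hα0 : 0 < α)
    (hα1 : α < 1) (c : ℝ) {t : ℝ} (ht : 0 < t) :
    IntervalIntegrable (fun ξ => (t - ξ) ^ (-α) * deriv (fun s => mittagLeffler α (c * s ^ α)) ξ)
      volume 0 t := by
  rw [show -α = 1 - α - 1 by ring]
  refine intervalIntegrable_sub_rpow_mul_of_abs_le (C := |c| * mittagLeffler₂ α α (|c| * t ^ α))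
    ht (sub_pos.2 hα1) hα0 (measurable_deriv _).aestronglyMeasurable fun ξ hξ => ?_
  have hE : |mittagLeffler₂ α α (c * ξ ^ α)| ≤ mittagLeffler₂ α α (|c| * t ^ α) := by
    refine abs_mittagLeffler₂_le hα0 hα1 hα0.le ?_
    rw [abs_mul, abs_of_pos (rpow_pos_of_pos hξ.1 _)]
    exact mul_le_mul_of_nonneg_left (rpow_le_rpow hξ.1.le hξ.2 hα0.le) (abs_nonneg c)
  rw [(hasDerivAt_mittagLeffler_mul_rpow hα0 hα1 c hξ.1).deriv, abs_mul, abs_mul,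
    abs_of_pos (rpow_pos_of_pos hξ.1 _)]
  calc |c| * (ξ ^ (α - 1) * |mittagLeffler₂ α α (c * ξ ^ α)|)
      ≤ |c| * (ξ ^ (α - 1) * mittagLeffler₂ α α (|c| * t ^ α)) := by
        have := rpow_pos_of_pos hξ.1 (α - 1)
        gcongr
    _ = _ := by ring

theorem caputoDeriv_mittagLeffler_mul_rpow {α : ℝ} (hα0 : 0 < α) (hα1 : α < 1) (c : ℝ) {t : ℝ}
    (ht : 0 < t) :
    caputoDeriv α (fun s => mittagLeffler α (c * s ^ α)) t = c * mittagLeffler α (c * t ^ α) := by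
  have hderiv : ∀ᵐ ξ, ξ ∈ uIoc 0 t → (t - ξ) ^ (-α) * deriv (fun s => mittagLeffler α (c * s ^ α)) ξ
      = c * ((t - ξ) ^ (1 - α - 1) * (ξ ^ (α - 1) * mittagLeffler₂ α α (c * ξ ^ α))) := by
    refine ae_of_all _ fun ξ hξ => ?_
    rw [uIoc_of_le ht.le] at hξ
    rw [(hasDerivAt_mittagLeffler_mul_rpow hα0 hα1 c hξ.1).deriv, show 1 - α - 1 = -α by ring]
    ring
  rw [caputoDeriv, intervalIntegral.integral_congr_ae hderiv, intervalIntegral.integral_const_mul,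
    integral_sub_rpow_mul_rpow_mul_mittagLeffler₂ hα0 hα1 hα0 (sub_pos.2 hα1) ht,
    show 1 - α + α = 1 by ring, sub_self, rpow_zero, mittagLeffler₂_one]
  have := (Gamma_pos_of_pos (sub_pos.2 hα1)).ne'
  field_simp

/-- `y(t) = E_α(−B t^α)` satisfies `y(0) = 1` and, for every `t > 0`, the Caputo derivative
of `y` of order `α` exists and equals `−B E_α(−B t^α)`; in particular `y` solves the
fractional relaxation equation `y^{(α)} + B y = 0`, `y(0) = 1`. -/
theorem mittagLeffler_solves_relaxation (α B : ℝ) (hα0 : 0 < α) (hα1 : α < 1)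
    (y : ℝ → ℝ) (hy : ∀ t : ℝ, y t = mittagLeffler α (-B * t ^ α)) :
    y 0 = 1 ∧
    ∀ t : ℝ, 0 < t →
      IntervalIntegrable (fun ξ => (t - ξ) ^ (-α) * deriv y ξ)
        MeasureTheory.volume 0 t ∧
      caputoDeriv α y t = -B * mittagLeffler α (-B * t ^ α) ∧
      caputoDeriv α y t + B * y t = 0 := by
  obtain rfl : y = fun t => mittagLeffler α (-B * t ^ α) := funext hy
  refine ⟨by simp only [zero_rpow hα0.ne', mul_zero, mittagLeffler_zero], fun t ht => ?_⟩
  have hcaputo := caputoDeriv_mittagLeffler_mul_rpow hα0 hα1 (-B) ht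
  exact ⟨intervalIntegrable_sub_rpow_mul_deriv_mittagLeffler_mul_rpow hα0 hα1 (-B) ht, hcaputo,
    by rw [hcaputo]; ring⟩
end

section
/- For every 0 < α < 1 and every t > 0, ∫₀ᵗ ξ^{α−1} E_{α,α}(−ξ^α) E_α(−2 (t−ξ)^α) dξ = E_α(−t^α) − E_α(−2 t^α). -/
/-- The two-parameter Mittag-Leffler function `E_{α,β}(x) = ∑_{n=0}^∞ xⁿ/Γ(αn+β)`. -/
noncomputable def mittagLeffler2 (α β x : ℝ) : ℝ :=
  ∑' n : ℕ, x ^ n / Real.Gamma (α * n + β)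

/-!
Expand both Mittag-Leffler functions and integrate term by term with the Beta integral
`∫₀ᵗ ξ^(a-1) (t-ξ)^(b-1) dξ = t^(a+b-1) Γ(a) Γ(b) / Γ(a+b)`: the convolution
`∫₀ᵗ ξ^(α-1) E_{α,α}(a ξ^α) E_α(b (t-ξ)^α) dξ` becomes
`∑ₖ (∑_{m+n=k} aᵐ bⁿ) t^(α(k+1)) / Γ(α(k+1)+1)`. Multiplying by `a - b` collapses the inner
sum to `a^(k+1) - b^(k+1)`, so `(a - b) ∫ = E_α(a t^α) - E_α(b t^α)`; the theorem is the case
`a = -1`, `b = -2`. Term-by-term integration is legitimate because `ξ^α, (t-ξ)^α ≤ t^α`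
dominates the `k`-th term by `ξ^(α-1)` times the `k`-th term of an absolutely convergent
Cauchy product. All series converge for `α > 0` since log-convexity of `Γ` gives
`Γ(s+α) ≥ Γ(s) (s-1)^α`.
-/

open MeasureTheory Filter Topology Finset

lemma Real.Gamma_mul_rpow_le_Gamma_add {s a : ℝ} (hs : 1 < s) (ha : 0 < a) :
    Real.Gamma s * (s - 1) ^ a ≤ Real.Gamma (s + a) := by
  have hs1 : 0 < s - 1 := by linarith
  have hG₀ := Real.Gamma_pos_of_pos hs1
  have hG₁ := Real.Gamma_pos_of_pos (by linarith : 0 < s)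
  have hG₂ := Real.Gamma_pos_of_pos (by linarith : 0 < s + a)
  -- the secant slope of the convex `log Γ` on `[s, s + a]` is at least the one on `[s - 1, s]`
  have hslope := Real.convexOn_log_Gamma.slope_mono_adjacent (x := s - 1) (y := s) (z := s + a)
    hs1 (by simp only [Set.mem_Ioi]; linarith) (by linarith) (by linarith)
  have hrec : Real.log (Real.Gamma s) - Real.log (Real.Gamma (s - 1)) = Real.log (s - 1) := by
    rw [show s = s - 1 + 1 by ring, Real.Gamma_add_one hs1.ne', add_sub_cancel_right,
      Real.log_mul hs1.ne' hG₀.ne', add_sub_cancel_right]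
  simp only [Function.comp_apply, sub_sub_cancel, div_one, add_sub_cancel_left, hrec,
    le_div_iff₀ ha] at hslope
  calc Real.Gamma s * (s - 1) ^ a
      = Real.exp (Real.log (Real.Gamma s) + Real.log (s - 1) * a) := by
        rw [Real.exp_add, Real.exp_log hG₁, Real.rpow_def_of_pos hs1]
    _ ≤ Real.exp (Real.log (Real.Gamma (s + a))) := Real.exp_le_exp.mpr (by linarith)
    _ = Real.Gamma (s + a) := Real.exp_log hG₂

lemma summable_pow_div_Gamma_mul_add {α : ℝ} (hα : 0 < α) (β x : ℝ) :
    Summable fun n : ℕ ↦ x ^ n / Real.Gamma (α * n + β) := by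
  have hlim : Tendsto (fun n : ℕ ↦ α * n + β - 1) atTop atTop :=
    tendsto_atTop_add_const_right _ _
      (tendsto_atTop_add_const_right _ _ (tendsto_natCast_atTop_atTop.const_mul_atTop hα))
  refine summable_of_ratio_norm_eventually_le (r := 1 / 2) (by norm_num) ?_
  filter_upwards [hlim.eventually_gt_atTop 0,
    ((tendsto_rpow_atTop hα).comp hlim).eventually_ge_atTop (2 * |x|)] with n hs hbig
  set s := α * n + β
  have hΓ₁ := Real.Gamma_pos_of_pos (by linarith : 0 < s)
  have hΓ₂ := Real.Gamma_pos_of_pos (by linarith : 0 < s + α)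
  replace hbig : 2 * |x| ≤ (s - 1) ^ α := hbig
  have hratio : |x| * Real.Gamma s ≤ 1 / 2 * Real.Gamma (s + α) := by
    nlinarith [mul_le_mul_of_nonneg_left hbig hΓ₁.le,
      Real.Gamma_mul_rpow_le_Gamma_add (by linarith : 1 < s) hα]
  rw [show α * ↑(n + 1) + β = s + α by push_cast; ring, norm_div, norm_div, norm_pow,
    norm_pow, Real.norm_of_nonneg hΓ₁.le, Real.norm_of_nonneg hΓ₂.le, Real.norm_eq_abs,
    div_le_iff₀ hΓ₂]
  calc |x| ^ (n + 1) = |x| ^ n / Real.Gamma s * (|x| * Real.Gamma s) := by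
        field_simp; ring
    _ ≤ |x| ^ n / Real.Gamma s * (1 / 2 * Real.Gamma (s + α)) := by gcongr
    _ = 1 / 2 * (|x| ^ n / Real.Gamma s) * Real.Gamma (s + α) := by ring

lemma norm_pow_div_Gamma_mul_add_le {α β x y : ℝ} (hα : 0 ≤ α) (hβ : 0 < β) (hxy : |x| ≤ y)
    (n : ℕ) : ‖x ^ n / Real.Gamma (α * n + β)‖ ≤ y ^ n / Real.Gamma (α * n + β) := by
  have hΓ := Real.Gamma_pos_of_pos (by positivity : 0 < α * n + β)
  rw [norm_div, norm_pow, Real.norm_of_nonneg hΓ.le, Real.norm_eq_abs]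
  gcongr

lemma mittagLeffler2_mul_mittagLeffler2 {α : ℝ} (hα : 0 < α) (β γ x y : ℝ) :
    mittagLeffler2 α β x * mittagLeffler2 α γ y =
      ∑' k : ℕ, ∑ p ∈ antidiagonal k,
        x ^ p.1 / Real.Gamma (α * p.1 + β) * (y ^ p.2 / Real.Gamma (α * p.2 + γ)) :=
  tsum_mul_tsum_eq_tsum_sum_antidiagonal_of_summable_norm
    (summable_pow_div_Gamma_mul_add hα β x).norm (summable_pow_div_Gamma_mul_add hα γ y).norm

lemma sub_mul_sum_antidiagonal_pow_mul_pow {R : Type*} [CommRing R] (x y : R) (k : ℕ) :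
    (x - y) * ∑ p ∈ antidiagonal k, x ^ p.1 * y ^ p.2 = x ^ (k + 1) - y ^ (k + 1) := by
  rw [Nat.sum_antidiagonal_eq_sum_range_succ (fun i j ↦ x ^ i * y ^ j),
    ← (Commute.all x y).mul_geom_sum₂]
  simp

lemma integral_rpow_mul_one_sub_rpow {a b : ℝ} (ha : 0 < a) (hb : 0 < b) :
    ∫ u in (0 : ℝ)..1, u ^ (a - 1) * (1 - u) ^ (b - 1) =
      Real.Gamma a * Real.Gamma b / Real.Gamma (a + b) := by
  have hβ := Complex.Gamma_mul_Gamma_eq_betaIntegral (s := a) (t := b) (by simpa) (by simpa)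
  have hreal : Complex.betaIntegral a b =
      ↑(∫ u in (0 : ℝ)..1, u ^ (a - 1) * (1 - u) ^ (b - 1)) := by
    rw [Complex.betaIntegral, ← intervalIntegral.integral_ofReal]
    refine intervalIntegral.integral_congr fun u hu ↦ ?_
    rw [Set.uIcc_of_le zero_le_one] at hu
    simp only [Complex.ofReal_mul]
    rw [Complex.ofReal_cpow hu.1, Complex.ofReal_cpow (sub_nonneg.mpr hu.2)]
    push_cast
    rfl
  rw [hreal, ← Complex.ofReal_add, Complex.Gamma_ofReal, Complex.Gamma_ofReal,
    Complex.Gamma_ofReal, ← Complex.ofReal_mul, ← Complex.ofReal_mul] at hβ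
  rw [eq_div_iff (Real.Gamma_pos_of_pos (add_pos ha hb)).ne', mul_comm]
  exact_mod_cast hβ.symm

lemma integral_rpow_mul_sub_rpow {a b t : ℝ} (ha : 0 < a) (hb : 0 < b) (ht : 0 < t) :
    ∫ ξ in (0 : ℝ)..t, ξ ^ (a - 1) * (t - ξ) ^ (b - 1) =
      t ^ (a + b - 1) * (Real.Gamma a * Real.Gamma b / Real.Gamma (a + b)) := by
  have hscale := intervalIntegral.smul_integral_comp_mul_left
    (fun ξ ↦ ξ ^ (a - 1) * (t - ξ) ^ (b - 1)) t (a := 0) (b := 1)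
  rw [mul_zero, mul_one] at hscale
  rw [← hscale, smul_eq_mul, ← integral_rpow_mul_one_sub_rpow ha hb,
    ← intervalIntegral.integral_const_mul, ← intervalIntegral.integral_const_mul]
  refine intervalIntegral.integral_congr fun u hu ↦ ?_
  rw [Set.uIcc_of_le zero_le_one] at hu
  rw [← mul_one_sub, Real.mul_rpow ht.le hu.1, Real.mul_rpow ht.le (sub_nonneg.mpr hu.2),
    show a + b - 1 = 1 + (a - 1) + (b - 1) by ring, Real.rpow_add ht, Real.rpow_add ht,
    Real.rpow_one]
  ring

section Convolution

variable {α t : ℝ} (a b : ℝ)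

lemma integral_rpow_mul_pow_div_Gamma_mul_pow_div_Gamma (hα : 0 < α) (ht : 0 < t)
    (m n : ℕ) :
    ∫ ξ in (0 : ℝ)..t, ξ ^ (α - 1) * ((a * ξ ^ α) ^ m / Real.Gamma (α * m + α) *
        ((b * (t - ξ) ^ α) ^ n / Real.Gamma (α * n + 1))) =
      a ^ m * b ^ n * ((t ^ α) ^ (m + n + 1) / Real.Gamma (α * ↑(m + n + 1) + 1)) := by
  have hΓ₁ := Real.Gamma_pos_of_pos (by positivity : 0 < α * m + α)
  have hΓ₂ := Real.Gamma_pos_of_pos (by positivity : 0 < α * n + 1)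
  have hΓ₃ := Real.Gamma_pos_of_pos (by positivity : 0 < α * ↑(m + n + 1) + 1)
  have hterm : ∀ ξ ∈ Set.uIoc 0 t,
      ξ ^ (α - 1) * ((a * ξ ^ α) ^ m / Real.Gamma (α * m + α) *
        ((b * (t - ξ) ^ α) ^ n / Real.Gamma (α * n + 1))) =
      a ^ m * b ^ n / (Real.Gamma (α * m + α) * Real.Gamma (α * n + 1)) *
        (ξ ^ ((α * m + α) - 1) * (t - ξ) ^ ((α * n + 1) - 1)) := by
    intro ξ hξ
    rw [Set.uIoc_of_le ht.le] at hξ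
    rw [add_sub_cancel_right, mul_pow, mul_pow, ← Real.rpow_mul_natCast hξ.1.le,
      ← Real.rpow_mul_natCast (sub_nonneg.mpr hξ.2), add_sub_assoc, Real.rpow_add hξ.1]
    field_simp
  rw [intervalIntegral.integral_congr_ae (ae_of_all _ fun ξ hξ ↦ hterm ξ hξ),
    intervalIntegral.integral_const_mul, integral_rpow_mul_sub_rpow (by positivity)
      (by positivity) ht]
  have hexp : α * m + α + (α * n + 1) - 1 = α * ↑(m + n + 1) := by push_cast; ring
  rw [hexp, show α * m + α + (α * n + 1) = α * ↑(m + n + 1) + 1 by rw [← hexp]; ring,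
    Real.rpow_mul_natCast ht.le]
  field_simp

lemma intervalIntegrable_rpow_sub_one_mul (hα : 0 < α) {g : ℝ → ℝ} (hg : Continuous g) :
    IntervalIntegrable (fun ξ ↦ ξ ^ (α - 1) * g ξ) volume 0 t :=
  (intervalIntegral.intervalIntegrable_rpow' (by linarith)).mul_continuousOn hg.continuousOn

noncomputable def mittagLefflerConvTerm (α a b t : ℝ) (k : ℕ) (ξ : ℝ) : ℝ :=
  ξ ^ (α - 1) * ∑ p ∈ antidiagonal k, (a * ξ ^ α) ^ p.1 / Real.Gamma (α * p.1 + α) *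
    ((b * (t - ξ) ^ α) ^ p.2 / Real.Gamma (α * p.2 + 1))

lemma integrableOn_mittagLefflerConvTerm (hα : 0 < α) (ht : 0 ≤ t) (k : ℕ) :
    IntegrableOn (mittagLefflerConvTerm α a b t k) (Set.Ioc 0 t) :=
  (intervalIntegrable_iff_integrableOn_Ioc_of_le ht).mp
    (intervalIntegrable_rpow_sub_one_mul hα (by fun_prop (disch := exact hα.le)))

lemma integral_mittagLefflerConvTerm (hα : 0 < α) (ht : 0 < t) (k : ℕ) :
    ∫ ξ in (0 : ℝ)..t, mittagLefflerConvTerm α a b t k ξ =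
      (∑ p ∈ antidiagonal k, a ^ p.1 * b ^ p.2) *
        ((t ^ α) ^ (k + 1) / Real.Gamma (α * ↑(k + 1) + 1)) := by
  simp only [mittagLefflerConvTerm, Finset.mul_sum, Finset.sum_mul]
  rw [intervalIntegral.integral_finsetSum fun p _ ↦
    intervalIntegrable_rpow_sub_one_mul hα (by fun_prop (disch := exact hα.le))]
  refine Finset.sum_congr rfl fun p hp ↦ ?_
  rw [integral_rpow_mul_pow_div_Gamma_mul_pow_div_Gamma a b hα ht, mem_antidiagonal.mp hp]

lemma norm_mittagLefflerConvTerm_le (hα : 0 < α) (k : ℕ) {ξ : ℝ} (hξ : ξ ∈ Set.Ioc 0 t) :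
    ‖mittagLefflerConvTerm α a b t k ξ‖ ≤ ξ ^ (α - 1) * ∑ p ∈ antidiagonal k,
      (|a| * t ^ α) ^ p.1 / Real.Gamma (α * p.1 + α) *
        ((|b| * t ^ α) ^ p.2 / Real.Gamma (α * p.2 + 1)) := by
  have hpow {x : ℝ} (hx₀ : 0 ≤ x) (hx : x ≤ t) (c : ℝ) : |c * x ^ α| ≤ |c| * t ^ α := by
    rw [abs_mul, abs_of_nonneg (Real.rpow_nonneg hx₀ α)]
    exact mul_le_mul_of_nonneg_left (Real.rpow_le_rpow hx₀ hx hα.le) (abs_nonneg c)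
  have hξα := Real.rpow_nonneg hξ.1.le (α - 1)
  rw [mittagLefflerConvTerm, norm_mul, Real.norm_of_nonneg hξα]
  refine mul_le_mul_of_nonneg_left ((norm_sum_le _ _).trans (sum_le_sum fun p _ ↦ ?_)) hξα
  have h₁ := norm_pow_div_Gamma_mul_add_le hα.le hα (hpow hξ.1.le hξ.2 a) p.1
  have h₂ := norm_pow_div_Gamma_mul_add_le hα.le one_pos
    (hpow (sub_nonneg.mpr hξ.2) (sub_le_self t hξ.1.le) b) p.2
  rw [norm_mul]
  exact mul_le_mul h₁ h₂ (norm_nonneg _) ((norm_nonneg _).trans h₁)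

lemma summable_integral_norm_mittagLefflerConvTerm (hα : 0 < α) (ht : 0 ≤ t) :
    Summable fun k ↦ ∫ ξ in Set.Ioc 0 t, ‖mittagLefflerConvTerm α a b t k ξ‖ := by
  set c : ℕ → ℝ := fun k ↦ ∑ p ∈ antidiagonal k,
    (|a| * t ^ α) ^ p.1 / Real.Gamma (α * p.1 + α) *
      ((|b| * t ^ α) ^ p.2 / Real.Gamma (α * p.2 + 1))
  have hc : Summable c :=
    (summable_norm_sum_mul_antidiagonal_of_summable_norm
      (summable_pow_div_Gamma_mul_add hα α (|a| * t ^ α)).norm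
      (summable_pow_div_Gamma_mul_add hα 1 (|b| * t ^ α)).norm).of_norm
  have hrpow : IntegrableOn (fun ξ : ℝ ↦ ξ ^ (α - 1)) (Set.Ioc 0 t) :=
    (intervalIntegrable_iff_integrableOn_Ioc_of_le ht).mp
      (intervalIntegral.intervalIntegrable_rpow' (by linarith))
  have hbound (k : ℕ) : ∫ ξ in Set.Ioc 0 t, ‖mittagLefflerConvTerm α a b t k ξ‖ ≤
      (∫ ξ in Set.Ioc 0 t, ξ ^ (α - 1)) * c k := by
    rw [← integral_mul_const]
    exact setIntegral_mono_on (integrableOn_mittagLefflerConvTerm a b hα ht k).norm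
      (hrpow.mul_const _) measurableSet_Ioc fun ξ hξ ↦ norm_mittagLefflerConvTerm_le a b hα k hξ
  exact .of_nonneg_of_le (fun k ↦ integral_nonneg fun _ ↦ norm_nonneg _) hbound (hc.mul_left _)

theorem integral_rpow_mul_mittagLeffler2_mul_mittagLeffler (hα : 0 < α) (ht : 0 < t) :
    ∫ ξ in (0 : ℝ)..t, ξ ^ (α - 1) * mittagLeffler2 α α (a * ξ ^ α) *
        mittagLeffler α (b * (t - ξ) ^ α) =
      ∑' k : ℕ, (∑ p ∈ antidiagonal k, a ^ p.1 * b ^ p.2) *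
        ((t ^ α) ^ (k + 1) / Real.Gamma (α * ↑(k + 1) + 1)) := by
  have hexpand (ξ : ℝ) : ξ ^ (α - 1) * mittagLeffler2 α α (a * ξ ^ α) *
      mittagLeffler α (b * (t - ξ) ^ α) = ∑' k, mittagLefflerConvTerm α a b t k ξ := by
    rw [mul_assoc, show mittagLeffler α _ = mittagLeffler2 α 1 _ from rfl,
      mittagLeffler2_mul_mittagLeffler2 hα, ← tsum_mul_left]
    rfl
  simp_rw [hexpand]
  rw [intervalIntegral.integral_of_le ht.le, ← integral_tsum_of_summable_integral_norm
    (integrableOn_mittagLefflerConvTerm a b hα ht.le)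
    (summable_integral_norm_mittagLefflerConvTerm a b hα ht.le)]
  refine tsum_congr fun k ↦ ?_
  rw [← intervalIntegral.integral_of_le ht.le, integral_mittagLefflerConvTerm a b hα ht]

theorem sub_mul_integral_rpow_mul_mittagLeffler2_mul_mittagLeffler (hα : 0 < α)
    (ht : 0 < t) :
    (a - b) * ∫ ξ in (0 : ℝ)..t, ξ ^ (α - 1) * mittagLeffler2 α α (a * ξ ^ α) *
        mittagLeffler α (b * (t - ξ) ^ α) =
      mittagLeffler α (a * t ^ α) - mittagLeffler α (b * t ^ α) := by
  have hsum (x : ℝ) : Summable fun n : ℕ ↦ (x * t ^ α) ^ n / Real.Gamma (α * n + 1) :=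
    summable_pow_div_Gamma_mul_add hα 1 _
  rw [integral_rpow_mul_mittagLeffler2_mul_mittagLeffler a b hα ht, ← tsum_mul_left,
    mittagLeffler, mittagLeffler, ← (hsum a).tsum_sub (hsum b),
    ((hsum a).sub (hsum b)).tsum_eq_zero_add]
  simp only [pow_zero, sub_self, zero_add]
  refine tsum_congr fun k ↦ ?_
  rw [← mul_assoc, sub_mul_sum_antidiagonal_pow_mul_pow, mul_pow, mul_pow]
  ring

end Convolution

theorem mittagLeffler_integral_identity_general (α t : ℝ) (hα0 : 0 < α)
    (ht : 0 < t) :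
    ∫ ξ in (0 : ℝ)..t, ξ ^ (α - 1) * mittagLeffler2 α α (-(ξ ^ α)) *
        mittagLeffler α (-2 * (t - ξ) ^ α) =
      mittagLeffler α (-(t ^ α)) - mittagLeffler α (-2 * t ^ α) := by
  have h := sub_mul_integral_rpow_mul_mittagLeffler2_mul_mittagLeffler (-1) (-2) hα0 ht
  rw [show (-1 : ℝ) - -2 = 1 by norm_num, one_mul] at h
  simpa only [neg_one_mul] using h

/-- For `0 < α < 1` and `t > 0`:
`∫₀ᵗ ξ^{α−1} E_{α,α}(−ξ^α) E_α(−2(t−ξ)^α) dξ = E_α(−t^α) − E_α(−2t^α)`. -/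
theorem mittagLeffler_integral_identity (α t : ℝ) (hα0 : 0 < α) (hα1 : α < 1)
    (ht : 0 < t) :
    ∫ ξ in (0 : ℝ)..t, ξ ^ (α - 1) * mittagLeffler2 α α (-(ξ ^ α)) *
        mittagLeffler α (-2 * (t - ξ) ^ α) =
      mittagLeffler α (-(t ^ α)) - mittagLeffler α (-2 * t ^ α) :=
  mittagLeffler_integral_identity_general α t hα0 ht
end

section
/- Let 0 < α < 1, B > 0, T > 0 and let m be a positive integer with mα > 2. Then the function z(t) = ∑_{n=m+1}^∞ (−B)^n t^{αn} / Γ(αn + 1) satisfies z(0) = 0, lim_{t→0⁺} z'(t) = 0 and lim_{t→0⁺} z''(t) = 0, where z' and z'' denote its first and second derivatives on (0,T]. -/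
/-!
Write `z(t) = ∑ cₙ t^{pₙ}` with `pₙ = α(m+1+n) > 2`. Log-convexity of `Γ` gives the Gautschi-type
bound `y^α Γ(y) ≤ 2 Γ(y+α)`, so the ratio test yields `∑ |cₙ| pₙ² < ∞`. This one majorant
dominates the termwise first and second derivatives on `(-1, 1)`, which justifies differentiating
term by term, and dominated convergence as `t → 0⁺` sends the three series, whose exponents
`pₙ`, `pₙ - 1`, `pₙ - 2` are all positive, to `0`.
-/

open Real Filter Set Topology

namespace Real

theorem Gamma_add_one_le_Gamma_add_mul_rpow_s17 {α y : ℝ} (hα0 : 0 < α) (hα1 : α < 1) (hy : 0 < y) :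
    Gamma (y + 1) ≤ Gamma (y + α) * (y + α) ^ (1 - α) := by
  have hyα : 0 < y + α := by linarith
  have hΓ : 0 < Gamma (y + α) := Gamma_pos_of_pos hyα
  have hconv := Gamma_mul_add_mul_le_rpow_Gamma_mul_rpow_Gamma hyα (by linarith : 0 < y + α + 1)
    hα0 (by linarith : 0 < 1 - α) (by ring)
  calc Gamma (y + 1) = Gamma (α * (y + α) + (1 - α) * (y + α + 1)) := by ring_nf
    _ ≤ Gamma (y + α) ^ α * Gamma (y + α + 1) ^ (1 - α) := hconv
    _ = Gamma (y + α) * (y + α) ^ (1 - α) := by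
      rw [Gamma_add_one hyα.ne', mul_rpow hyα.le hΓ.le, mul_left_comm, ← rpow_add hΓ,
        add_sub_cancel, rpow_one, mul_comm]

theorem rpow_mul_Gamma_le_two_mul_Gamma_add {α y : ℝ} (hα0 : 0 < α) (hα1 : α < 1) (hy : α ≤ y) :
    y ^ α * Gamma y ≤ 2 * Gamma (y + α) := by
  have hy0 : 0 < y := hα0.trans_le hy
  have hpow : (y + α) ^ (1 - α) ≤ 2 * y ^ (1 - α) :=
    calc (y + α) ^ (1 - α) ≤ (2 * y) ^ (1 - α) := by gcongr; linarith
      _ = 2 ^ (1 - α) * y ^ (1 - α) := mul_rpow zero_le_two hy0.le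
      _ ≤ 2 * y ^ (1 - α) := by
        gcongr; exact rpow_le_self_of_one_le one_le_two (by linarith)
  have hy_split : y = y ^ α * y ^ (1 - α) := by
    rw [← rpow_add hy0, add_sub_cancel, rpow_one]
  have key : y ^ α * Gamma y * y ^ (1 - α) ≤ 2 * Gamma (y + α) * y ^ (1 - α) :=
    calc y ^ α * Gamma y * y ^ (1 - α) = Gamma (y + 1) := by
          rw [Gamma_add_one hy0.ne', mul_right_comm, ← hy_split]
      _ ≤ Gamma (y + α) * (y + α) ^ (1 - α) :=
          Gamma_add_one_le_Gamma_add_mul_rpow_s17 hα0 hα1 hy0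
      _ ≤ 2 * Gamma (y + α) * y ^ (1 - α) := by
          rw [mul_assoc]
          nlinarith [Gamma_pos_of_pos (by linarith : 0 < y + α)]
  exact le_of_mul_le_mul_right key (rpow_pos_of_pos hy0 _)

theorem summable_pow_mul_pow_div_Gamma {α : ℝ} (hα0 : 0 < α) (hα1 : α < 1) (j : ℕ) (B : ℝ) :
    Summable fun k : ℕ => (k : ℝ) ^ j * B ^ k / Gamma (α * k + 1) := by
  set r : ℕ → ℝ := fun k => 2 ^ (j + 1) * |B| / (α * k + 1) ^ α
  have hratio : ∀ k : ℕ, 1 ≤ k → ‖(k + 1 : ℕ) ^ j * B ^ (k + 1) / Gamma (α * (k + 1 : ℕ) + 1)‖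
      ≤ r k * ‖(k : ℝ) ^ j * B ^ k / Gamma (α * k + 1)‖ := by
    intro k hk
    set y : ℝ := α * k + 1
    have hy : α ≤ y := by simp only [y]; nlinarith [(Nat.one_le_cast (α := ℝ)).2 hk]
    have hΓ : 0 < Gamma y := Gamma_pos_of_pos (by positivity)
    have hΓα : 0 < Gamma (y + α) := Gamma_pos_of_pos (by positivity)
    have hk2 : ((k + 1 : ℕ) : ℝ) ^ j ≤ 2 ^ j * (k : ℝ) ^ j := by
      rw [← mul_pow]; gcongr; push_cast; linarith [(Nat.one_le_cast (α := ℝ)).2 hk]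
    have hGamma : 1 / Gamma (y + α) ≤ 2 / (y ^ α * Gamma y) := by
      rw [div_le_div_iff₀ hΓα (by positivity)]
      linarith [rpow_mul_Gamma_le_two_mul_Gamma_add hα0 hα1 hy]
    have harg : α * ((k + 1 : ℕ) : ℝ) + 1 = y + α := by push_cast; ring
    simp only [r, norm_div, norm_mul, norm_pow, Real.norm_eq_abs, Nat.abs_cast, harg,
      abs_of_pos hΓ, abs_of_pos hΓα]
    calc ((k + 1 : ℕ) : ℝ) ^ j * |B| ^ (k + 1) / Gamma (y + α)
        = ((k + 1 : ℕ) : ℝ) ^ j * |B| ^ (k + 1) * (1 / Gamma (y + α)) := by ring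
      _ ≤ 2 ^ j * (k : ℝ) ^ j * |B| ^ (k + 1) * (2 / (y ^ α * Gamma y)) := by gcongr
      _ = 2 ^ (j + 1) * |B| / y ^ α * ((k : ℝ) ^ j * |B| ^ k / Gamma y) := by
        field_simp; ring
  have hr : Tendsto r atTop (𝓝 0) := by
    refine tendsto_const_nhds.div_atTop ((tendsto_rpow_atTop hα0).comp ?_)
    exact tendsto_atTop_add_const_right _ 1
      ((tendsto_natCast_atTop_atTop).const_mul_atTop hα0)
  refine summable_of_ratio_norm_eventually_le (r := 1 / 2) (by norm_num) ?_
  filter_upwards [eventually_ge_atTop 1, hr.eventually_le_const (by norm_num : (0 : ℝ) < 1 / 2)]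
    with k hk hrk
  exact (hratio k hk).trans (by gcongr)

end Real

noncomputable def rpowSeries (c p : ℕ → ℝ) (t : ℝ) : ℝ := ∑' n, c n * t ^ p n

namespace rpowSeries

variable {c p : ℕ → ℝ}

theorem apply_zero (hp : ∀ n, p n ≠ 0) : rpowSeries c p 0 = 0 := by
  simp [rpowSeries, zero_rpow (hp _)]

theorem hasDerivAt (hp : ∀ n, 1 ≤ p n) (hc : Summable fun n => |c n| * p n) {x : ℝ}
    (hx : x ∈ Ioo (-1) 1) :
    HasDerivAt (rpowSeries c p) (rpowSeries (fun n => c n * p n) (fun n => p n - 1) x) x := by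
  have hterm : ∀ n y, HasDerivAt (fun t => c n * t ^ p n) (c n * p n * y ^ (p n - 1)) y := by
    intro n y
    simpa only [mul_assoc] using ((hasDerivAt_rpow_const (Or.inr (hp n))).const_mul (c n))
  have hbound : ∀ n, ∀ y ∈ Ioo (-1 : ℝ) 1, ‖c n * p n * y ^ (p n - 1)‖ ≤ |c n| * p n := by
    intro n y hy
    have hy1 : |y ^ (p n - 1)| ≤ 1 := (abs_rpow_le_abs_rpow y _).trans
      (rpow_le_one (abs_nonneg y) (abs_lt.2 hy).le (by linarith [hp n]))
    rw [Real.norm_eq_abs, abs_mul, abs_mul, abs_of_pos (by linarith [hp n] : 0 < p n)]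
    exact mul_le_of_le_one_right (mul_nonneg (abs_nonneg _) (by linarith [hp n])) hy1
  have hsum0 : Summable fun n => c n * (0 : ℝ) ^ p n := by
    simp only [fun n => zero_rpow (by linarith [hp n] : p n ≠ 0), mul_zero, summable_zero]
  exact hasDerivAt_tsum_of_isPreconnected hc isOpen_Ioo (convex_Ioo _ _).isPreconnected
    (fun n y _ => hterm n y) hbound (by norm_num) hsum0 hx

theorem eqOn_deriv (hp : ∀ n, 1 ≤ p n) (hc : Summable fun n => |c n| * p n) :
    EqOn (deriv (rpowSeries c p)) (rpowSeries (fun n => c n * p n) (fun n => p n - 1))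
      (Ioo (-1) 1) :=
  fun _ hx => (hasDerivAt hp hc hx).deriv

theorem tendsto_nhdsGT_zero (hp : ∀ n, 0 < p n) (hc : Summable fun n => |c n|) :
    Tendsto (rpowSeries c p) (𝓝[>] 0) (𝓝 0) := by
  have hterm : ∀ n, Tendsto (fun t : ℝ => c n * t ^ p n) (𝓝[>] 0) (𝓝 0) := by
    intro n
    have := ((continuousAt_rpow_const 0 (p n) (Or.inr (hp n).le)).const_mul (c n)).tendsto
    simpa [zero_rpow (hp n).ne'] using this.mono_left nhdsWithin_le_nhds
  have hbound : ∀ᶠ t : ℝ in 𝓝[>] 0, ∀ n, ‖c n * t ^ p n‖ ≤ |c n| := by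
    filter_upwards [Ioo_mem_nhdsGT (zero_lt_one' ℝ)] with t ht n
    rw [Real.norm_eq_abs, abs_mul, abs_of_nonneg (rpow_nonneg ht.1.le _)]
    exact mul_le_of_le_one_right (abs_nonneg _) (rpow_le_one ht.1.le ht.2.le (hp n).le)
  have := tendsto_tsum_of_dominated_convergence hc hterm hbound
  rwa [tsum_zero] at this

theorem tendsto_derivs_nhdsGT_zero (hp : ∀ n, 2 < p n) (hc : Summable fun n => |c n| * p n ^ 2) :
    rpowSeries c p 0 = 0 ∧ Tendsto (deriv (rpowSeries c p)) (𝓝[>] 0) (𝓝 0) ∧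
      Tendsto (deriv (deriv (rpowSeries c p))) (𝓝[>] 0) (𝓝 0) := by
  have hp1 : ∀ n, 1 ≤ p n := fun n => by linarith [hp n]
  have hp1' : ∀ n, 1 ≤ p n - 1 := fun n => by linarith [hp n]
  have hp0 : ∀ n, 0 < p n := fun n => by linarith [hp n]
  have hc1 : Summable fun n => |c n| * p n :=
    hc.of_nonneg_of_le (fun n => mul_nonneg (abs_nonneg _) (hp0 n).le)
      (fun n => mul_le_mul_of_nonneg_left (le_self_pow₀ (hp1 n) two_ne_zero) (abs_nonneg _))
  have hc2 : Summable fun n => |c n * p n| * (p n - 1) :=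
    hc.of_nonneg_of_le (fun n => mul_nonneg (abs_nonneg _) (by linarith [hp1' n]))
      (fun n => by
        rw [abs_mul, abs_of_pos (hp0 n), mul_assoc, sq]
        exact mul_le_mul_of_nonneg_left (by nlinarith [hp0 n]) (abs_nonneg _))
  have hderiv2 : EqOn (deriv (deriv (rpowSeries c p)))
      (rpowSeries (fun n => c n * p n * (p n - 1)) (fun n => p n - 1 - 1)) (Ioo (-1) 1) :=
    ((eqOn_deriv hp1 hc1).deriv isOpen_Ioo).trans (eqOn_deriv hp1' hc2)
  have hlim1 : Tendsto (rpowSeries (fun n => c n * p n) (fun n => p n - 1)) (𝓝[>] 0) (𝓝 0) :=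
    tendsto_nhdsGT_zero (fun n => by linarith [hp n])
      (hc1.congr fun n => by rw [abs_mul, abs_of_pos (hp0 n)])
  have hlim2 : Tendsto (rpowSeries (fun n => c n * p n * (p n - 1)) (fun n => p n - 1 - 1))
      (𝓝[>] 0) (𝓝 0) :=
    tendsto_nhdsGT_zero (fun n => by linarith [hp n])
      (hc2.congr fun n => by
        rw [abs_mul (c n * p n), abs_of_nonneg (by linarith [hp1' n] : (0 : ℝ) ≤ p n - 1)])
  have hnear : ∀ᶠ t in 𝓝[>] (0 : ℝ), t ∈ Ioo (-1 : ℝ) 1 := by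
    filter_upwards [Ioo_mem_nhdsGT (zero_lt_one' ℝ)] with t ht using ⟨by linarith [ht.1], ht.2⟩
  refine ⟨apply_zero fun n => (hp0 n).ne', ?_, ?_⟩
  · exact hlim1.congr' (hnear.mono fun t ht => (eqOn_deriv hp1 hc1 ht).symm)
  · exact hlim2.congr' (hnear.mono fun t ht => (hderiv2 ht).symm)

end rpowSeries

theorem tail_derivatives_vanish_at_zero_general (α B : ℝ) (m : ℕ)
    (hα0 : 0 < α) (hα1 : α < 1) (hmα : 2 < m * α)
    (z : ℝ → ℝ)
    (hz : ∀ t : ℝ, z t = ∑' n : ℕ,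
      (-B) ^ (m + 1 + n) * t ^ (α * ((m : ℝ) + 1 + n)) /
        Real.Gamma (α * ((m : ℝ) + 1 + n) + 1)) :
    z 0 = 0 ∧
    Filter.Tendsto (fun t => deriv z t) (nhdsWithin 0 (Set.Ioi 0)) (nhds 0) ∧
    Filter.Tendsto (fun t => deriv (deriv z) t) (nhdsWithin 0 (Set.Ioi 0)) (nhds 0) := by
  set p : ℕ → ℝ := fun n => α * ((m : ℝ) + 1 + n)
  set c : ℕ → ℝ := fun n => (-B) ^ (m + 1 + n) / Gamma (p n + 1)
  have hzc : z = rpowSeries c p :=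
    funext fun t => (hz t).trans (tsum_congr fun n => (div_mul_eq_mul_div _ _ _).symm)
  have hp : ∀ n, 2 < p n := fun n => by
    have : (m : ℝ) * α ≤ p n := by simp only [p]; nlinarith [n.cast_nonneg (α := ℝ)]
    linarith
  have hc : Summable fun n => |c n| * p n ^ 2 := by
    refine (((summable_nat_add_iff (m + 1)).2
      (summable_pow_mul_pow_div_Gamma hα0 hα1 2 |B|)).mul_left (α ^ 2)).congr fun n => ?_
    rw [abs_div, abs_pow, abs_neg, abs_of_pos (Gamma_pos_of_pos (by linarith [hp n])),
      Nat.add_comm n]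
    push_cast
    ring
  rw [hzc]
  exact rpowSeries.tendsto_derivs_nhdsGT_zero hp hc

/-- For `mα > 2`, the tail `z(t) = ∑_{n=m+1}^∞ (−B)^n t^{αn}/Γ(αn+1)` satisfies
`z(0) = 0`, `z'(t) → 0` and `z''(t) → 0` as `t → 0⁺`, where `z'` and `z''` are its first
and second derivatives on `(0,T]`. -/
theorem tail_derivatives_vanish_at_zero (α B T : ℝ) (m : ℕ)
    (hα0 : 0 < α) (hα1 : α < 1) (hB : 0 < B) (hT : 0 < T)
    (hm : 0 < m) (hmα : 2 < m * α)
    (z : ℝ → ℝ)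
    (hz : ∀ t : ℝ, z t = ∑' n : ℕ,
      (-B) ^ (m + 1 + n) * t ^ (α * ((m : ℝ) + 1 + n)) /
        Real.Gamma (α * ((m : ℝ) + 1 + n) + 1)) :
    z 0 = 0 ∧
    Filter.Tendsto (fun t => deriv z t) (nhdsWithin 0 (Set.Ioi 0)) (nhds 0) ∧
    Filter.Tendsto (fun t => deriv (deriv z) t) (nhdsWithin 0 (Set.Ioi 0)) (nhds 0) :=
  tail_derivatives_vanish_at_zero_general α B m hα0 hα1 hmα z hz
end
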